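/- Let e ∈ (0, π/2) and ψ₀ ∈ ℝ, and define six ring lights at elevation e by l_k = (cos e · cos(ψ₀ + kπ/3), cos e · sin(ψ₀ + kπ/3), sin e) for k = 0, 1, …, 5. Then for every unit vector n ∈ ℝ³ with n₃ > 0, the number of indices k with ⟪n, l_k⟫ > 0 is at least 3. -/

import Mathlib

open scoped RealInnerProductSpace Classical

/-- The ring light at azimuth `θ` at elevation `e`:
`(cos e · cos θ, cos e · sin θ, sin e)`. -/
noncomputable def ringLightAt (e θ : ℝ) : EuclideanSpace ℝ (Fin 3) :=
  (EuclideanSpace.equiv (Fin 3) ℝ).symm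
    ![Real.cos e * Real.cos θ, Real.cos e * Real.sin θ, Real.sin e]

lemma inner_ringLightAt (n : EuclideanSpace ℝ (Fin 3)) (e θ : ℝ) :
    ⟪n, ringLightAt e θ⟫ =
      n 0 * (Real.cos e * Real.cos θ) + n 1 * (Real.cos e * Real.sin θ)
        + n 2 * Real.sin e := by
  simp [ringLightAt, PiLp.inner_apply, Fin.sum_univ_three, RCLike.inner_apply]
  ring

lemma pair_sum (n : EuclideanSpace ℝ (Fin 3)) (e θ : ℝ) :
    ⟪n, ringLightAt e θ⟫ + ⟪n, ringLightAt e (θ + Real.pi)⟫ =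
      2 * (n 2 * Real.sin e) := by
  rw [inner_ringLightAt, inner_ringLightAt, Real.cos_add_pi, Real.sin_add_pi]
  ring

/-- For every elevation `e ∈ (0, π/2)` and offset `ψ₀`, the six
uniformly spaced ring lights at elevation `e` (azimuths `ψ₀ + kπ/3`, `k = 0, …, 5`)
illuminate every unit normal of the open upper hemisphere at least three times. -/
theorem six_ring_lights_any_elevation (e ψ₀ : ℝ) (he : e ∈ Set.Ioo 0 (Real.pi / 2))
    (n : EuclideanSpace ℝ (Fin 3)) (hn : ‖n‖ = 1) (hn3 : 0 < n 2) :
    3 ≤ ((Finset.range 6).filter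
        (fun k : ℕ => 0 < ⟪n, ringLightAt e (ψ₀ + k * Real.pi / 3)⟫)).card := by
  obtain ⟨he0, he2⟩ := he
  have hsin : 0 < Real.sin e :=
    Real.sin_pos_of_pos_of_lt_pi he0 (lt_trans he2 (by linarith [Real.pi_pos]))
  have hsum : 0 < 2 * (n 2 * Real.sin e) := by positivity
  set P : ℕ → Prop := fun k => 0 < ⟪n, ringLightAt e (ψ₀ + k * Real.pi / 3)⟫ with hP
  have hpair : ∀ k : ℕ, k < 3 → P k ∨ P (k + 3) := by
    intro k hk
    by_contra h
    push_neg at h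
    obtain ⟨h1, h2⟩ := h
    simp only [hP, not_lt] at h1 h2
    have harg : ψ₀ + (↑(k + 3) : ℝ) * Real.pi / 3 = ψ₀ + k * Real.pi / 3 + Real.pi := by
      push_cast; ring
    have := pair_sum n e (ψ₀ + k * Real.pi / 3)
    rw [← harg] at this
    nlinarith
  set S := (Finset.range 6).filter
      (fun k : ℕ => 0 < ⟪n, ringLightAt e (ψ₀ + k * Real.pi / 3)⟫) with hS
  have hmem : ∀ k : ℕ, k < 6 → P k → k ∈ S := by
    intro k hk hPk
    simp [hS, Finset.mem_filter, hk]
    exact hPk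
  have h0 := hpair 0 (by norm_num)
  have h1 := hpair 1 (by norm_num)
  have h2 := hpair 2 (by norm_num)
  have key : ∀ a b c : ℕ, a ∈ S → b ∈ S → c ∈ S → a ≠ b → a ≠ c → b ≠ c →
      3 ≤ S.card := by
    intro a b c ha hb hc hab hac hbc
    have : ({a, b, c} : Finset ℕ) ⊆ S := by
      intro x hx
      simp only [Finset.mem_insert, Finset.mem_singleton] at hx
      rcases hx with rfl | rfl | rfl <;> assumption
    calc 3 = ({a, b, c} : Finset ℕ).card := by
            rw [Finset.card_insert_of_notMem (by simp [hab, hac]),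
              Finset.card_insert_of_notMem (by simp [hbc]), Finset.card_singleton]
      _ ≤ S.card := Finset.card_le_card this
  rcases h0 with p0 | p0 <;> rcases h1 with p1 | p1 <;> rcases h2 with p2 | p2 <;>
    exact key _ _ _ (hmem _ (by norm_num) p0) (hmem _ (by norm_num) p1)
      (hmem _ (by norm_num) p2) (by norm_num) (by norm_num) (by norm_num)
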